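/- arXiv:1406.6471 — 5 statements merged into one kernel-verified Lean document; each statement's English description precedes it below -/
import Mathlib

section
/- For μ > 0, ν > 0 and z in the open unit disk of ℂ, the series 1 + ∑_{n≥1} ((n+1)/((nμ+1)(nν+1))) z^n equals the double integral ∫₀¹∫₀¹ (1 − s^μ t^ν z)^{−2} ds dt. -/
/-!
Expand `(1 - w) ^ (-2) = ∑ (n + 1) wⁿ` with `w = s ^ μ t ^ ν z`. Since `‖w‖ ≤ ‖z‖ < 1`, the
series is dominated by `∑ (n + 1) ‖z‖ⁿ`, so it may be integrated termwise, first in `s` and then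
in `t`, using `∫₀¹ (x ^ p) ^ n dx = 1 / (n p + 1)`. Splitting off the term `n = 0` gives the
stated series.
-/

open intervalIntegral MeasureTheory Set

theorem hasSum_succ_mul_geometric {𝕜 : Type*} [NormedField 𝕜] [CompleteSpace 𝕜] {r : 𝕜}
    (hr : ‖r‖ < 1) : HasSum (fun n : ℕ => ((n : 𝕜) + 1) * r ^ n) ((1 - r) ^ (-2 : ℤ)) := by
  convert hasSum_choose_mul_geometric_of_norm_lt_one 1 hr using 1
  · simp
  · simp [zpow_neg, one_div]

theorem summable_norm_succ_mul_geometric {w : ℂ} (hw : ‖w‖ < 1) :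
    Summable fun n : ℕ => ‖((n : ℂ) + 1) * w ^ n‖ := by
  have := (hasSum_succ_mul_geometric (r := ‖w‖) (by simpa using hw)).summable
  simpa [norm_mul, ← Nat.cast_add_one, -Nat.cast_add, Complex.norm_natCast] using this

theorem rpow_mem_Icc_zero_one {x p : ℝ} (hx : x ∈ Icc (0:ℝ) 1) (hp : 0 ≤ p) :
    x ^ p ∈ Icc (0:ℝ) 1 :=
  ⟨Real.rpow_nonneg hx.1 p, Real.rpow_le_one hx.1 hx.2 hp⟩

theorem norm_ofReal_mul_lt_one {x : ℝ} (hx : x ∈ Icc (0:ℝ) 1) {z : ℂ} (hz : ‖z‖ < 1) :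
    ‖(x : ℂ) * z‖ < 1 := by
  rw [norm_mul, Complex.norm_real, Real.norm_of_nonneg hx.1]
  exact (mul_le_of_le_one_left (norm_nonneg z) hx.2).trans_lt hz

theorem integral_ofReal_rpow_pow {p : ℝ} (hp : 0 ≤ p) (n : ℕ) :
    ∫ x in (0:ℝ)..1, ((x ^ p : ℝ) : ℂ) ^ n = ((1 / (n * p + 1) : ℝ) : ℂ) := by
  have hpow : EqOn (fun x : ℝ => ((x ^ p : ℝ) : ℂ) ^ n) (fun x => ((x ^ (n * p) : ℝ) : ℂ))
      (uIcc 0 1) := fun x hx => by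
    rw [uIcc_of_le zero_le_one] at hx
    simp only [← Complex.ofReal_pow, ← Real.rpow_natCast, ← Real.rpow_mul hx.1, mul_comm]
  rw [integral_congr hpow, integral_ofReal,
    integral_rpow (Or.inl (neg_one_lt_zero.trans_le (by positivity)))]
  simp [Real.zero_rpow (by positivity : n * p + 1 ≠ 0)]

theorem hasSum_integral_of_hasSum_rpow_pow {p : ℝ} (hp : 0 ≤ p) {a : ℕ → ℂ}
    (ha : Summable fun n => ‖a n‖) {f : ℝ → ℂ}
    (hf : ∀ x ∈ Ioc (0:ℝ) 1, HasSum (fun n => a n * ((x ^ p : ℝ) : ℂ) ^ n) (f x)) :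
    HasSum (fun n => a n / ((n * p + 1 : ℝ) : ℂ)) (∫ x in (0:ℝ)..1, f x) := by
  set F : ℕ → ℝ → ℂ := fun n x => a n * ((x ^ p : ℝ) : ℂ) ^ n
  have hF_int : ∀ n, IntegrableOn (F n) (Ioc 0 1) := fun n =>
    (continuous_const.mul ((Complex.continuous_ofReal.comp
      (Real.continuous_rpow_const hp)).pow n)).integrableOn_Ioc
  have hF_norm : ∀ n, ∫ x in Ioc (0:ℝ) 1, ‖F n x‖ ≤ ‖a n‖ := fun n => by
    refine (setIntegral_mono_on (hF_int n).norm
      (integrableOn_const (C := ‖a n‖) measure_Ioc_lt_top.ne) measurableSet_Ioc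
      fun x hx => ?_).trans_eq (by simp)
    have hxp := rpow_mem_Icc_zero_one (Ioc_subset_Icc_self hx) hp
    rw [norm_mul, norm_pow, Complex.norm_real, Real.norm_of_nonneg hxp.1]
    exact mul_le_of_le_one_right (norm_nonneg _) (pow_le_one₀ hxp.1 hxp.2)
  have hcoeff : ∀ n, ∫ x in Ioc (0:ℝ) 1, F n x = a n / ((n * p + 1 : ℝ) : ℂ) := fun n => by
    rw [← integral_of_le zero_le_one, intervalIntegral.integral_const_mul,
      integral_ofReal_rpow_pow hp]
    push_cast
    ring
  have key := hasSum_integral_of_summable_integral_norm hF_int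
    (ha.of_nonneg_of_le (fun n => integral_nonneg fun _ => norm_nonneg _) hF_norm)
  rw [integral_of_le zero_le_one,
    setIntegral_congr_fun measurableSet_Ioc fun x hx => (hf x hx).tsum_eq.symm]
  simpa only [hcoeff] using key

theorem hasSum_integral_one_sub_rpow_mul_zpow_neg_two {p : ℝ} (hp : 0 ≤ p) {w : ℂ}
    (hw : ‖w‖ < 1) :
    HasSum (fun n : ℕ => ((n : ℂ) + 1) * w ^ n / ((n * p + 1 : ℝ) : ℂ))
      (∫ s in (0:ℝ)..1, (1 - ((s ^ p : ℝ) : ℂ) * w) ^ (-2 : ℤ)) := by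
  refine hasSum_integral_of_hasSum_rpow_pow hp (summable_norm_succ_mul_geometric hw)
    fun s hs => ?_
  have hsw := norm_ofReal_mul_lt_one (rpow_mem_Icc_zero_one (Ioc_subset_Icc_self hs) hp) hw
  exact (hasSum_succ_mul_geometric hsw).congr_fun fun n => by ring

theorem stmt_2 (μ ν : ℝ) (hμ : 0 < μ) (hν : 0 < ν) (z : ℂ) (hz : ‖z‖ < 1) :
    1 + ∑' n : ℕ, (((n : ℂ) + 2) / ((((n : ℝ) + 1) * μ + 1) * (((n : ℝ) + 1) * ν + 1) : ℝ))
        * z ^ (n + 1)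
      = ∫ t in (0:ℝ)..1, ∫ s in (0:ℝ)..1,
          (1 - ((s ^ μ * t ^ ν : ℝ) : ℂ) * z) ^ (-2 : ℤ) := by
  have hinner : ∀ t ∈ Ioc (0:ℝ) 1,
      HasSum (fun n : ℕ => ((n : ℂ) + 1) * z ^ n / ((n * μ + 1 : ℝ) : ℂ) * ((t ^ ν : ℝ) : ℂ) ^ n)
        (∫ s in (0:ℝ)..1, (1 - ((s ^ μ * t ^ ν : ℝ) : ℂ) * z) ^ (-2 : ℤ)) := fun t ht => by
    have htz := norm_ofReal_mul_lt_one (rpow_mem_Icc_zero_one (Ioc_subset_Icc_self ht) hν.le) hz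
    have := hasSum_integral_one_sub_rpow_mul_zpow_neg_two hμ.le htz
    simp only [← mul_assoc, ← Complex.ofReal_mul] at this
    exact this.congr_fun fun n => by ring
  have hsummable : Summable fun n : ℕ => ‖((n : ℂ) + 1) * z ^ n / ((n * μ + 1 : ℝ) : ℂ)‖ :=
    (summable_norm_succ_mul_geometric hz).of_nonneg_of_le (fun _ => norm_nonneg _) fun n => by
      rw [norm_div, Complex.norm_real, Real.norm_of_nonneg (by positivity)]
      exact div_le_self (norm_nonneg _) (le_add_of_nonneg_left (by positivity))
  have houter := hasSum_integral_of_hasSum_rpow_pow hν.le hsummable hinner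
  rw [← houter.tsum_eq, houter.summable.tsum_eq_zero_add]
  congr 1
  · simp
  · refine tsum_congr fun n => ?_
    simp only [div_div]
    push_cast
    ring
end

section
/- Let μ, ν > 0, 0 ≤ σ < 1 and g(t) = (2/(μν)) ∫₀¹∫₀¹ ((1 − σ(1+swt))/((1−σ)(1+swt)²)) s^{1/μ − 1} w^{1/ν − 1} ds dw − 1 for t ∈ [0,1]. Then g has the power series expansion g(t) = 2 ∑_{n≥0} ((n+1−σ)(−t)^n)/((1−σ)(1+nμ)(1+nν)) − 1, valid for t ∈ [0,1). -/
/-!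
With `x = s w t`, the integrand's rational factor is the power series
`∑ (n + 1 - σ) / (1 - σ) * (-x)ⁿ`, obtained from the geometric series and `∑ n rⁿ = r / (1 - r)²`.
Its coefficients are absolutely summable, so dominated convergence lets us integrate term by term
against `s ^ (a - 1)` and then `w ^ (b - 1)`, each step contributing a factor `1 / (n + a)`,
resp. `1 / (n + b)`. For `a = 1/μ`, `b = 1/ν` one has
`2 / (μ ν (n + a) (n + b)) = 2 / ((1 + n μ) (1 + n ν))`.
-/

open Set intervalIntegral

lemma hasSum_add_one_sub_div_mul_geometric {σ x : ℝ} (hσ : σ ≠ 1) (hx : |x| < 1) :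
    HasSum (fun n : ℕ => ((n : ℝ) + 1 - σ) / (1 - σ) * (-x) ^ n)
      ((1 - σ * (1 + x)) / ((1 - σ) * (1 + x) ^ 2)) := by
  have hr : ‖-x‖ < 1 := by rwa [norm_neg, Real.norm_eq_abs]
  have h1σ : 1 - σ ≠ 0 := sub_ne_zero.mpr hσ.symm
  have h1x : 1 + x ≠ 0 := by linarith [neg_abs_le x]
  have h := ((hasSum_coe_mul_geometric_of_norm_lt_one hr).add
    ((hasSum_geometric_of_norm_lt_one hr).mul_left (1 - σ))).div_const (1 - σ)
  rw [sub_neg_eq_add] at h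
  have hsum : (1 - σ * (1 + x)) / ((1 - σ) * (1 + x) ^ 2)
      = (-x / (1 + x) ^ 2 + (1 - σ) * (1 + x)⁻¹) / (1 - σ) := by
    field_simp
    ring
  rw [hsum]
  exact h.congr_fun fun n => by ring

lemma summable_mul_pow_of_mem_Icc {c : ℕ → ℝ} (hc : Summable c) {x : ℝ} (hx : x ∈ Icc 0 1) :
    Summable fun n => c n * x ^ n :=
  hc.abs.of_norm_bounded fun n => by
    rw [norm_mul, norm_pow, Real.norm_eq_abs, Real.norm_of_nonneg hx.1]
    exact mul_le_of_le_one_right (abs_nonneg _) (pow_le_one₀ hx.1 hx.2)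

lemma integral_pow_mul_rpow (n : ℕ) {a : ℝ} (ha : 0 < a) :
    ∫ x in (0:ℝ)..1, x ^ n * x ^ (a - 1) = 1 / (n + a) := by
  have hna : 0 < (n : ℝ) + a := by positivity
  calc ∫ x in (0:ℝ)..1, x ^ n * x ^ (a - 1) = ∫ x in (0:ℝ)..1, x ^ ((n : ℝ) + a - 1) := by
        refine integral_congr_ae (Filter.Eventually.of_forall fun x hx => ?_)
        rw [uIoc_of_le zero_le_one] at hx
        rw [add_sub_assoc, Real.rpow_add hx.1, Real.rpow_natCast]
    _ = 1 / (n + a) := by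
        rw [integral_rpow (Or.inl (by linarith)), sub_add_cancel, Real.one_rpow,
          Real.zero_rpow hna.ne']
        ring

lemma hasSum_integral_tsum_mul_rpow {a : ℝ} (ha : 0 < a) {c : ℕ → ℝ} (hc : Summable c) :
    HasSum (fun n => c n / (n + a)) (∫ x in (0:ℝ)..1, (∑' n, c n * x ^ n) * x ^ (a - 1)) := by
  have hrpow : IntervalIntegrable (fun x : ℝ => x ^ (a - 1)) MeasureTheory.volume 0 1 :=
    intervalIntegrable_rpow' (by linarith)
  have hterm : ∀ n : ℕ, IntervalIntegrable (fun x : ℝ => c n * x ^ n * x ^ (a - 1))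
      MeasureTheory.volume 0 1 := fun n =>
    hrpow.continuousOn_mul (by fun_prop)
  refine (hasSum_integral_of_dominated_convergence (fun n x => |c n| * x ^ (a - 1))
    (fun n => (hterm n).def'.aestronglyMeasurable) ?_ ?_ ?_ ?_).congr_fun fun n => ?_
  · exact fun n => .of_forall fun x hx => by
      rw [uIoc_of_le zero_le_one] at hx
      rw [norm_mul, norm_mul, norm_pow, Real.norm_eq_abs, Real.norm_of_nonneg hx.1.le,
        Real.norm_of_nonneg (Real.rpow_nonneg hx.1.le _)]
      exact mul_le_mul_of_nonneg_right
        (mul_le_of_le_one_right (abs_nonneg _) (pow_le_one₀ hx.1.le hx.2))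
        (Real.rpow_nonneg hx.1.le _)
  · exact .of_forall fun x _ => hc.abs.mul_right _
  · simp_rw [tsum_mul_right]
    exact hrpow.const_mul _
  · refine .of_forall fun x hx => ?_
    rw [uIoc_of_le zero_le_one] at hx
    exact (summable_mul_pow_of_mem_Icc hc (Ioc_subset_Icc_self hx)).hasSum.mul_right _
  · simp_rw [mul_assoc, intervalIntegral.integral_const_mul, integral_pow_mul_rpow n ha]
    ring

lemma hasSum_integral_integral_tsum_mul_rpow {a b : ℝ} (ha : 0 < a) (hb : 0 < b) {c : ℕ → ℝ}
    (hc : Summable c) :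
    HasSum (fun n => c n / ((n + a) * (n + b)))
      (∫ w in (0:ℝ)..1, ∫ s in (0:ℝ)..1,
        (∑' n, c n * (s * w) ^ n) * s ^ (a - 1) * w ^ (b - 1)) := by
  have hinner : ∀ w ∈ uIcc (0:ℝ) 1,
      ∫ s in (0:ℝ)..1, (∑' n, c n * (s * w) ^ n) * s ^ (a - 1) * w ^ (b - 1)
        = (∑' n, c n / (n + a) * w ^ n) * w ^ (b - 1) := by
    intro w hw
    rw [uIcc_of_le zero_le_one] at hw
    rw [integral_mul_const]
    congr 1
    calc ∫ s in (0:ℝ)..1, (∑' n, c n * (s * w) ^ n) * s ^ (a - 1)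
        = ∫ s in (0:ℝ)..1, (∑' n, c n * w ^ n * s ^ n) * s ^ (a - 1) :=
          integral_congr fun s _ => congrArg (· * _) (tsum_congr fun n => by ring)
      _ = ∑' n, c n * w ^ n / (n + a) :=
          (hasSum_integral_tsum_mul_rpow ha (summable_mul_pow_of_mem_Icc hc hw)).tsum_eq.symm
      _ = ∑' n, c n / (n + a) * w ^ n := tsum_congr fun n => div_mul_eq_mul_div _ _ _ |>.symm
  have hca : Summable fun n : ℕ => c n / (n + a) :=
    (hc.abs.div_const a).of_norm_bounded fun n => by
      rw [Real.norm_eq_abs, abs_div, abs_of_pos (by positivity : (0:ℝ) < n + a)]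
      exact div_le_div_of_nonneg_left (abs_nonneg _) ha (le_add_of_nonneg_left n.cast_nonneg)
  rw [integral_congr hinner]
  exact (hasSum_integral_tsum_mul_rpow hb hca).congr_fun fun n => by rw [div_div]

theorem stmt_6_general (μ ν σ : ℝ) (hμ : 0 < μ) (hν : 0 < ν) (hσ1 : σ < 1) :
    ∀ t ∈ Ico (0:ℝ) 1,
      (2 / (μ * ν)) *
          (∫ w in (0:ℝ)..1, ∫ s in (0:ℝ)..1,
            ((1 - σ * (1 + s * w * t)) / ((1 - σ) * (1 + s * w * t) ^ 2)) *
              s ^ (1 / μ - 1) * w ^ (1 / ν - 1)) - 1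
        = 2 * (∑' n : ℕ, (((n : ℝ) + 1 - σ) * (-t) ^ n) /
            ((1 - σ) * (1 + (n : ℝ) * μ) * (1 + (n : ℝ) * ν))) - 1 := by
  rintro t ⟨ht0, ht1⟩
  set c : ℕ → ℝ := fun n => ((n : ℝ) + 1 - σ) / (1 - σ) * (-t) ^ n
  have hc : Summable c :=
    (hasSum_add_one_sub_div_mul_geometric hσ1.ne (by rwa [abs_of_nonneg ht0])).summable
  have hexpand : ∀ w ∈ uIcc (0:ℝ) 1, ∀ s ∈ uIcc (0:ℝ) 1,
      (1 - σ * (1 + s * w * t)) / ((1 - σ) * (1 + s * w * t) ^ 2)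
        = ∑' n, c n * (s * w) ^ n := by
    intro w hw s hs
    rw [uIcc_of_le zero_le_one] at hw hs
    have hswt : |s * w * t| < 1 := by
      rw [abs_of_nonneg (mul_nonneg (mul_nonneg hs.1 hw.1) ht0)]
      exact (mul_le_of_le_one_left ht0 (mul_le_one₀ hs.2 hw.1 hw.2)).trans_lt ht1
    rw [← (hasSum_add_one_sub_div_mul_geometric hσ1.ne hswt).tsum_eq]
    exact tsum_congr fun n => by ring
  rw [integral_congr fun w hw => integral_congr fun s hs => by rw [hexpand w hw s hs],
    ← (hasSum_integral_integral_tsum_mul_rpow (by positivity) (by positivity) hc).tsum_eq,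
    ← tsum_mul_left, ← tsum_mul_left]
  congr 1
  refine tsum_congr fun n => ?_
  have h1σ : 1 - σ ≠ 0 := by linarith
  simp only [c]
  field_simp
  ring

theorem stmt_6 (μ ν σ : ℝ) (hμ : 0 < μ) (hν : 0 < ν) (hσ0 : 0 ≤ σ) (hσ1 : σ < 1) :
    ∀ t ∈ Ico (0:ℝ) 1,
      (2 / (μ * ν)) *
          (∫ w in (0:ℝ)..1, ∫ s in (0:ℝ)..1,
            ((1 - σ * (1 + s * w * t)) / ((1 - σ) * (1 + s * w * t) ^ 2)) *
              s ^ (1 / μ - 1) * w ^ (1 / ν - 1)) - 1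
        = 2 * (∑' n : ℕ, (((n : ℝ) + 1 - σ) * (-t) ^ n) /
            ((1 - σ) * (1 + (n : ℝ) * μ) * (1 + (n : ℝ) * ν))) - 1 :=
  stmt_6_general μ ν σ hμ hν hσ1
end

section
/- Let μ, ν > 0, 0 ≤ σ < 1 and q(t) = (1/(μν)) ∫₀¹∫₀¹ ((1 − σ − (1+σ)swt)/((1−σ)(1+swt)³)) s^{1/μ − 1} w^{1/ν − 1} ds dw for t ∈ [0,1]. Then q has the power series expansion q(t) = ∑_{n≥0} ((n+1)(n+1−σ)(−t)^n)/((1−σ)(1+nμ)(1+nν)), valid for t ∈ [0,1). -/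
/-!
Expanding the kernel, `(1 - σ - (1 + σ) x) / (1 + x) ^ 3 = ∑ (n + 1) (n + 1 - σ) (-x) ^ n` for
`|x| < 1`, the integrand becomes a power series in `s w t`. Since
`∫₀¹ s ^ (n + a - 1) ds = 1 / (n + a)`, integrating term by term in `s` and then in `w`
(legitimate because the coefficients are absolutely summable and the monomials are nonnegative)
divides the `n`-th coefficient by `(n + 1/μ) (n + 1/ν)`, which together with the prefactor
`1 / (μ ν)` is `1 / ((1 + n μ) (1 + n ν))`.
-/

open Set intervalIntegral MeasureTheory

theorem hasSum_succ_mul_succ_sub_mul_neg_pow (σ : ℝ) {x : ℝ} (hx : |x| < 1) :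
    HasSum (fun n : ℕ => ((n : ℝ) + 1) * ((n : ℝ) + 1 - σ) * (-x) ^ n)
      ((1 - σ - (1 + σ) * x) / (1 + x) ^ 3) := by
  have hr : ‖-x‖ < 1 := by rwa [norm_neg, Real.norm_eq_abs]
  have hx' : 1 + x ≠ 0 := by linarith [neg_abs_le x]
  -- `(n + 1) (n + 1 - σ) = 2 (n + 2).choose 2 - (1 + σ) (n + 1).choose 1`
  have hsum : (1 - σ - (1 + σ) * x) / (1 + x) ^ 3
      = 2 * (1 / (1 - -x) ^ (2 + 1)) - (1 + σ) * (1 / (1 - -x) ^ (1 + 1)) := by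
    rw [sub_neg_eq_add]
    field_simp
    ring
  rw [hsum]
  refine ((hasSum_choose_mul_geometric_of_norm_lt_one 2 hr).mul_left 2).sub
    ((hasSum_choose_mul_geometric_of_norm_lt_one 1 hr).mul_left (1 + σ)) |>.congr_fun fun n => ?_
  rw [Nat.cast_choose_two, Nat.choose_one_right]
  push_cast
  ring

theorem integral_zero_one_rpow {r : ℝ} (hr : -1 < r) : ∫ x in (0:ℝ)..1, x ^ r = 1 / (r + 1) := by
  rw [integral_rpow (Or.inl hr), Real.one_rpow, Real.zero_rpow (by linarith)]
  ring

theorem hasSum_div_nat_add_integral_tsum {a : ℝ} (ha : 0 < a) {c : ℕ → ℝ} (hc : Summable c) :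
    HasSum (fun n : ℕ => c n / (n + a))
      (∫ x in Ioc (0:ℝ) 1, ∑' n : ℕ, c n * x ^ ((n : ℝ) + a - 1)) := by
  have hexp : ∀ n : ℕ, -1 < (n : ℝ) + a - 1 := fun n => by
    linarith [n.cast_nonneg (α := ℝ)]
  have hint (k : ℝ) (n : ℕ) : IntegrableOn (fun x : ℝ => k * x ^ ((n : ℝ) + a - 1)) (Ioc 0 1) :=
    ((intervalIntegrable_iff_integrableOn_Ioc_of_le zero_le_one).1
      (intervalIntegrable_rpow' (hexp n))).const_mul k
  have hval (k : ℝ) (n : ℕ) : ∫ x in Ioc (0:ℝ) 1, k * x ^ ((n : ℝ) + a - 1) = k / (n + a) := by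
    rw [← integral_of_le zero_le_one, intervalIntegral.integral_const_mul,
      integral_zero_one_rpow (hexp n)]
    ring_nf
  have hnorm (n : ℕ) :
      ∫ x in Ioc (0:ℝ) 1, ‖c n * x ^ ((n : ℝ) + a - 1)‖ = |c n| / (n + a) := by
    rw [← hval]
    refine setIntegral_congr_fun measurableSet_Ioc fun x hx => ?_
    rw [Real.norm_eq_abs, abs_mul, abs_of_nonneg (Real.rpow_nonneg hx.1.le _)]
  have hsum : Summable fun n : ℕ => |c n| / (n + a) :=
    hc.abs.div_const a |>.of_nonneg_of_le (fun n => by positivity) fun n =>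
      div_le_div_of_nonneg_left (abs_nonneg _) ha (by linarith [n.cast_nonneg (α := ℝ)])
  refine (hasSum_integral_of_summable_integral_norm (fun n => hint (c n) n) ?_).congr_fun
    fun n => ?_
  · simpa only [hnorm] using hsum
  · exact (hval _ _).symm

theorem hasSum_div_nat_add_integral_mul_rpow {a : ℝ} (ha : 0 < a) {c : ℕ → ℝ} {f : ℝ → ℝ}
    (hf : ∀ x ∈ Ioc (0:ℝ) 1, HasSum (fun n : ℕ => c n * x ^ n) (f x)) :
    HasSum (fun n : ℕ => c n / (n + a)) (∫ x in (0:ℝ)..1, f x * x ^ (a - 1)) := by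
  have hc : Summable c := by simpa using (hf 1 (right_mem_Ioc.2 zero_lt_one)).summable
  rw [integral_of_le zero_le_one, setIntegral_congr_fun measurableSet_Ioc fun x hx => ?_]
  · exact hasSum_div_nat_add_integral_tsum ha hc
  rw [← (hf x hx).tsum_eq, ← tsum_mul_right]
  refine tsum_congr fun n => ?_
  rw [add_sub_assoc, Real.rpow_add hx.1, Real.rpow_natCast, mul_assoc]

theorem hasSum_div_nat_add_mul_integral_integral {a b : ℝ} (ha : 0 < a) (hb : 0 < b)
    {c : ℕ → ℝ} {f : ℝ → ℝ} (hf : ∀ x ∈ Ioc (0:ℝ) 1, HasSum (fun n : ℕ => c n * x ^ n) (f x)) :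
    HasSum (fun n : ℕ => c n / ((n + a) * (n + b)))
      (∫ w in (0:ℝ)..1, ∫ s in (0:ℝ)..1, f (s * w) * s ^ (a - 1) * w ^ (b - 1)) := by
  have hinner (w : ℝ) (hw : w ∈ Ioc (0:ℝ) 1) :
      HasSum (fun n : ℕ => c n / (n + a) * w ^ n) (∫ s in (0:ℝ)..1, f (s * w) * s ^ (a - 1)) := by
    refine (hasSum_div_nat_add_integral_mul_rpow ha (c := fun n => c n * w ^ n)
      fun s hs => ?_).congr_fun fun n => ?_
    · exact (hf (s * w) ⟨mul_pos hs.1 hw.1, mul_le_one₀ hs.2 hw.1.le hw.2⟩).congr_fun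
        fun n => by rw [mul_pow]; ring
    · ring
  simp only [intervalIntegral.integral_mul_const]
  refine (hasSum_div_nat_add_integral_mul_rpow hb hinner).congr_fun fun n => ?_
  rw [div_div]

theorem stmt_7_general (μ ν σ : ℝ) (hμ : 0 < μ) (hν : 0 < ν) :
    ∀ t ∈ Ico (0:ℝ) 1,
      (1 / (μ * ν)) *
          (∫ w in (0:ℝ)..1, ∫ s in (0:ℝ)..1,
            ((1 - σ - (1 + σ) * s * w * t) / ((1 - σ) * (1 + s * w * t) ^ 3)) *
              s ^ (1 / μ - 1) * w ^ (1 / ν - 1))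
        = ∑' n : ℕ, (((n : ℝ) + 1) * ((n : ℝ) + 1 - σ) * (-t) ^ n) /
            ((1 - σ) * (1 + (n : ℝ) * μ) * (1 + (n : ℝ) * ν)) := by
  rintro t ⟨ht0, ht1⟩
  have hf (x : ℝ) (hx : x ∈ Ioc (0:ℝ) 1) :
      HasSum (fun n : ℕ => ((n : ℝ) + 1) * ((n : ℝ) + 1 - σ) * (-t) ^ n / (1 - σ) * x ^ n)
        ((1 - σ - (1 + σ) * x * t) / ((1 - σ) * (1 + x * t) ^ 3)) := by
    have hxt : |x * t| < 1 := by
      rw [abs_of_nonneg (mul_nonneg hx.1.le ht0)]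
      nlinarith [hx.2]
    rw [show (1 - σ - (1 + σ) * x * t) / ((1 - σ) * (1 + x * t) ^ 3)
        = (1 - σ - (1 + σ) * (x * t)) / (1 + x * t) ^ 3 / (1 - σ) by rw [div_div]; ring]
    refine ((hasSum_succ_mul_succ_sub_mul_neg_pow σ hxt).div_const (1 - σ)).congr_fun fun n => ?_
    rw [show -(x * t) = -t * x by ring, mul_pow]
    ring
  have hseries := hasSum_div_nat_add_mul_integral_integral (one_div_pos.2 hμ) (one_div_pos.2 hν) hf
  simp only [← mul_assoc] at hseries
  rw [← (hseries.mul_left (1 / (μ * ν))).tsum_eq]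
  refine tsum_congr fun n => ?_
  field_simp
  ring

theorem stmt_7 (μ ν σ : ℝ) (hμ : 0 < μ) (hν : 0 < ν) (hσ0 : 0 ≤ σ) (hσ1 : σ < 1) :
    ∀ t ∈ Ico (0:ℝ) 1,
      (1 / (μ * ν)) *
          (∫ w in (0:ℝ)..1, ∫ s in (0:ℝ)..1,
            ((1 - σ - (1 + σ) * s * w * t) / ((1 - σ) * (1 + s * w * t) ^ 3)) *
              s ^ (1 / μ - 1) * w ^ (1 / ν - 1))
        = ∑' n : ℕ, (((n : ℝ) + 1) * ((n : ℝ) + 1 - σ) * (-t) ^ n) /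
            ((1 - σ) * (1 + (n : ℝ) * μ) * (1 + (n : ℝ) * ν)) :=
  stmt_7_general μ ν σ hμ hν
end

section
/- Let β < 1, γ ≥ 0, and μ, ν ≥ 0 with μ + ν = α − γ, μν = γ. The function f(z) = z + ∑_{n≥1} (2(1−β)/((nμ+1)(nν+1))) z^{n+1} satisfies the differential equation (1 − α + 2γ) f(z)/z + (α − 2γ) f′(z) + γ z f″(z) = β + (1−β)(1+z)/(1−z) on the open unit disk. -/
/-!
Since `μ + ν = α - γ` and `μ ν = γ`, the operator
`L g = (1 - α + 2γ) g / z + (α - 2γ) g' + γ z g''` sends `z ^ (n + 2)` to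
`((n + 1) μ + 1) ((n + 1) ν + 1) z ^ (n + 1)` (and `z` to `1`). The coefficients of `f` cancel
exactly this factor, so `L f = 1 + 2 (1 - β) ∑ z ^ (n + 1) = β + (1 - β) (1 + z) / (1 - z)`.
Termwise differentiation is legitimate because the coefficients are bounded.
-/

open Metric Asymptotics Filter

lemma isBigO_natCast_add_const (a : ℂ) :
    (fun n : ℕ => (n : ℂ) + a) =O[atTop] (fun n : ℕ => (n : ℂ)) := by
  refine (isBigO_refl _ _).add ((isBigO_const_one ℂ a atTop).trans ?_)
  refine ((isLittleO_one_left_iff ℂ).mpr ?_).isBigO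
  simpa using tendsto_natCast_atTop_atTop

section PowerSeries

variable {b : ℕ → ℂ} {k : ℕ}

lemma Asymptotics.IsBigO.mul_natCast_add (hb : b =O[atTop] fun n => ((n ^ k : ℕ) : ℂ)) (a : ℂ) :
    (fun n => b n * ((n : ℂ) + a)) =O[atTop] fun n => ((n ^ (k + 1) : ℕ) : ℂ) :=
  (hb.mul (isBigO_natCast_add_const a)).congr_right fun n => by push_cast; ring

lemma summable_norm_mul_pow_add (hb : b =O[atTop] fun n => ((n ^ k : ℕ) : ℂ)) {z : ℂ}
    (hz : ‖z‖ < 1) (m : ℕ) : Summable fun n => ‖b n * z ^ (n + m)‖ :=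
  ((summable_norm_mul_geometric_of_norm_lt_one' hz hb).mul_right (‖z‖ ^ m)).congr fun n => by
    simp only [norm_mul, norm_pow, pow_add]; ring

lemma hasDerivAt_tsum_mul_pow (hb : b =O[atTop] fun n => ((n ^ k : ℕ) : ℂ)) (m : ℕ) {z : ℂ}
    (hz : ‖z‖ < 1) :
    HasDerivAt (fun w => ∑' n, b n * w ^ (n + m + 1))
      (∑' n, b n * ((n : ℂ) + m + 1) * z ^ (n + m)) z := by
  obtain ⟨r, hzr, hr1⟩ := exists_between hz
  have hr0 : 0 ≤ r := (norm_nonneg z).trans hzr.le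
  have hr : ‖(r : ℂ)‖ < 1 := by rwa [Complex.norm_real, Real.norm_of_nonneg hr0]
  refine hasDerivAt_tsum_of_isPreconnected (t := ball (0 : ℂ) r) (y₀ := 0)
    (g := fun n w => b n * w ^ (n + m + 1))
    (g' := fun n w => b n * ((n : ℂ) + m + 1) * w ^ (n + m))
    (summable_norm_mul_pow_add (hb.mul_natCast_add (m + 1)) hr m) isOpen_ball
    (convex_ball (0 : ℂ) r).isPreconnected (fun n w _ => ?_) (fun n w hw => ?_) ?_ ?_ ?_
  · refine ((hasDerivAt_pow (n + m + 1) w).const_mul (b n)).congr_deriv ?_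
    rw [Nat.add_sub_cancel]
    push_cast
    ring
  · rw [mem_ball_zero_iff] at hw
    simp only [norm_mul, norm_pow, ← add_assoc, Complex.norm_real, Real.norm_of_nonneg hr0]
    gcongr
  · exact mem_ball_self ((norm_nonneg z).trans_lt hzr)
  · simp
  · simpa using hzr

lemma hasDerivAt_id_add_tsum_mul_pow_two (hb : b =O[atTop] fun n => ((n ^ k : ℕ) : ℂ)) {z : ℂ}
    (hz : ‖z‖ < 1) :
    HasDerivAt (fun w => w + ∑' n, b n * w ^ (n + 2))
      (1 + ∑' n, b n * ((n : ℂ) + 2) * z ^ (n + 1)) z := by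
  refine (hasDerivAt_id z).add ((hasDerivAt_tsum_mul_pow hb 1 hz).congr_deriv ?_)
  exact tsum_congr fun n => by push_cast; ring

lemma hasDerivAt_deriv_id_add_tsum_mul_pow_two (hb : b =O[atTop] fun n => ((n ^ k : ℕ) : ℂ))
    {z : ℂ} (hz : ‖z‖ < 1) :
    HasDerivAt (deriv fun w => w + ∑' n, b n * w ^ (n + 2))
      (∑' n, b n * ((n : ℂ) + 2) * ((n : ℂ) + 1) * z ^ n) z := by
  have hderiv : (deriv fun w => w + ∑' n, b n * w ^ (n + 2)) =ᶠ[nhds z]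
      fun w => 1 + ∑' n, b n * ((n : ℂ) + 2) * w ^ (n + 1) := by
    filter_upwards [isOpen_ball.mem_nhds (mem_ball_zero_iff.mpr hz)] with w hw
    exact (hasDerivAt_id_add_tsum_mul_pow_two hb (mem_ball_zero_iff.mp hw)).deriv
  refine HasDerivAt.congr_of_eventuallyEq ?_ hderiv
  refine ((hasDerivAt_tsum_mul_pow (hb.mul_natCast_add 2) 0 hz).const_add 1).congr_deriv ?_
  exact tsum_congr fun n => by push_cast; ring

end PowerSeries

noncomputable def seriesCoeff (β μ ν : ℝ) (n : ℕ) : ℝ :=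
  2 * (1 - β) / (((n + 1) * μ + 1) * ((n + 1) * ν + 1))

section Coefficients

variable {α γ μ ν β : ℝ}

lemma indicial_eq (hsum : μ + ν = α - γ) (hprod : μ * ν = γ) (x : ℝ) :
    (1 - α + 2 * γ) + (α - 2 * γ) * (x + 1) + γ * (x + 1) * x = (x * μ + 1) * (x * ν + 1) := by
  linear_combination x * hsum.symm + x ^ 2 * hprod.symm

lemma one_le_mul_add_one_mul_add_one (hμ : 0 ≤ μ) (hν : 0 ≤ ν) (n : ℕ) :
    1 ≤ (((n : ℝ) + 1) * μ + 1) * (((n : ℝ) + 1) * ν + 1) :=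
  one_le_mul_of_one_le_of_one_le (by nlinarith) (by nlinarith)

lemma isBigO_seriesCoeff (hμ : 0 ≤ μ) (hν : 0 ≤ ν) :
    (fun n => (seriesCoeff β μ ν n : ℂ)) =O[atTop] fun n => ((n ^ 0 : ℕ) : ℂ) := by
  refine IsBigO.of_bound |2 * (1 - β)| (Eventually.of_forall fun n => ?_)
  have hD := one_le_mul_add_one_mul_add_one hμ hν n
  simp only [seriesCoeff, Complex.norm_real, Real.norm_eq_abs, abs_div, pow_zero, Nat.cast_one,
    norm_one, mul_one, abs_of_pos (zero_lt_one.trans_le hD)]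
  exact div_le_self (abs_nonneg _) hD

lemma seriesCoeff_operator_term (hsum : μ + ν = α - γ) (hprod : μ * ν = γ) (hμ : 0 ≤ μ)
    (hν : 0 ≤ ν) {z : ℂ} (hz : z ≠ 0) (n : ℕ) :
    ((1 - α + 2 * γ : ℝ) : ℂ) / z * ((seriesCoeff β μ ν n : ℂ) * z ^ (n + 2)) +
        ((α - 2 * γ : ℝ) : ℂ) * ((seriesCoeff β μ ν n : ℂ) * ((n : ℂ) + 2) * z ^ (n + 1)) +
        (γ : ℂ) * z * ((seriesCoeff β μ ν n : ℂ) * ((n : ℂ) + 2) * ((n : ℂ) + 1) * z ^ n) =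
      ((2 * (1 - β) : ℝ) : ℂ) * z * z ^ n := by
  have hD := (zero_lt_one.trans_le (one_le_mul_add_one_mul_add_one hμ hν n)).ne'
  have key : seriesCoeff β μ ν n * ((1 - α + 2 * γ) + (α - 2 * γ) * ((n : ℝ) + 2) +
      γ * ((n : ℝ) + 2) * ((n : ℝ) + 1)) = 2 * (1 - β) := by
    rw [seriesCoeff, show (n : ℝ) + 2 = (n + 1) + 1 by ring, indicial_eq hsum hprod,
      div_mul_cancel₀ _ hD]
  have hkey := congrArg (fun x : ℝ => (x : ℂ)) key
  push_cast at hkey ⊢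
  linear_combination (z * z ^ n) * hkey +
    (1 - α + 2 * γ) * (seriesCoeff β μ ν n : ℂ) * z ^ (n + 1) * inv_mul_cancel₀ hz

end Coefficients

theorem stmt_11_general (α γ μ ν β : ℝ)
    (hμ : 0 ≤ μ) (hν : 0 ≤ ν) (hsum : μ + ν = α - γ) (hprod : μ * ν = γ)
    (f : ℂ → ℂ)
    (hf : f = fun z : ℂ => z + ∑' n : ℕ,
      ((2 * (1 - β) / ((((n : ℝ) + 1) * μ + 1) * (((n : ℝ) + 1) * ν + 1)) : ℝ) : ℂ) *
        z ^ (n + 2)) :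
    ∀ z ∈ ball (0:ℂ) 1, z ≠ 0 →
      ((1 - α + 2 * γ : ℝ) : ℂ) * f z / z + ((α - 2 * γ : ℝ) : ℂ) * deriv f z +
          (γ : ℂ) * z * deriv (deriv f) z
        = (β : ℂ) + ((1 - β : ℝ) : ℂ) * (1 + z) / (1 - z) := by
  intro z hz hz0
  replace hz : ‖z‖ < 1 := mem_ball_zero_iff.mp hz
  replace hf : f = fun w => w + ∑' n, (seriesCoeff β μ ν n : ℂ) * w ^ (n + 2) := hf
  have hc := isBigO_seriesCoeff (β := β) hμ hν
  have hF₀ := (summable_norm_mul_pow_add hc hz 2).of_norm.hasSum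
  have hF₁ := (summable_norm_mul_pow_add (hc.mul_natCast_add 2) hz 1).of_norm.hasSum
  have hF₂ :=
    (summable_norm_mul_pow_add ((hc.mul_natCast_add 2).mul_natCast_add 1) hz 0).of_norm.hasSum
  have hLf := ((hF₀.mul_left (((1 - α + 2 * γ : ℝ) : ℂ) / z)).add
    (hF₁.mul_left ((α - 2 * γ : ℝ) : ℂ))).add (hF₂.mul_left ((γ : ℂ) * z))
  simp only [add_zero, seriesCoeff_operator_term hsum hprod hμ hν hz0] at hLf
  have hE := hLf.unique
    ((hasSum_geometric_of_norm_lt_one hz).mul_left (((2 * (1 - β) : ℝ) : ℂ) * z))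
  have h1z : 1 - z ≠ 0 := sub_ne_zero.mpr fun h => by simp [← h] at hz
  rw [hf, (hasDerivAt_id_add_tsum_mul_pow_two hc hz).deriv,
    (hasDerivAt_deriv_id_add_tsum_mul_pow_two hc hz).deriv]
  field_simp at hE ⊢
  push_cast at hE ⊢
  linear_combination hE

theorem stmt_11 (α γ μ ν β : ℝ) (hβ : β < 1) (hα : 0 ≤ α) (hγ : 0 ≤ γ)
    (hμ : 0 ≤ μ) (hν : 0 ≤ ν) (hsum : μ + ν = α - γ) (hprod : μ * ν = γ)
    (f : ℂ → ℂ)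
    (hf : f = fun z : ℂ => z + ∑' n : ℕ,
      ((2 * (1 - β) / ((((n : ℝ) + 1) * μ + 1) * (((n : ℝ) + 1) * ν + 1)) : ℝ) : ℂ) *
        z ^ (n + 2)) :
    ∀ z ∈ ball (0:ℂ) 1, z ≠ 0 →
      ((1 - α + 2 * γ : ℝ) : ℂ) * f z / z + ((α - 2 * γ : ℝ) : ℂ) * deriv f z +
          (γ : ℂ) * z * deriv (deriv f) z
        = (β : ℂ) + ((1 - β : ℝ) : ℂ) * (1 + z) / (1 - z) :=
  stmt_11_general α γ μ ν β hμ hν hsum hprod f hf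
end

section
/- Let μ, ν ≥ 1 with ν ≥ μ, σ ∈ [0, 1/2], ξ ∈ (0,1], and suppose 1/ξ + 2/μ − 1/ν ≥ 2 and σ ≤ (1/2)·((1/μ − 1/ν)/(1 + 1/μ − 1/ν)). Fix t ∈ (0,1) and define φ_t(x) = x(x−1) t^x log(1/t) − x( (1/ξ + 2/μ − 1/ν − 2) log(1/t) + (1 − 2σ) ) t^x. Then φ_t is decreasing on (−1, 0]. -/
/-!
With `L = log (1/t) ≥ 0` and `a = (1/ξ + 2/μ - 1/ν - 2) L + (1 - 2σ) ≥ 0`, and using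
`d/dx t^x = -L t^x`, the derivative of `φ_t` is
`t^x ((2x - 1) L - a - x (x - 1) L² + x a L)`.
For `x ≤ 0` each of the four summands is nonpositive, so `φ_t` is antitone on all of `(-∞, 0]`.
-/

open Set

theorem hasDerivAt_mul_rpow_log_sub (t a x : ℝ) (ht : 0 < t) :
    HasDerivAt (fun x : ℝ => x * (x - 1) * t ^ x * Real.log (1 / t) - x * a * t ^ x)
      (t ^ x * ((2 * x - 1) * Real.log (1 / t) - a - x * (x - 1) * Real.log (1 / t) ^ 2 +
        x * a * Real.log (1 / t))) x := by
  have hpow : HasDerivAt (fun x : ℝ => t ^ x) (t ^ x * Real.log t) x :=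
    (Real.hasStrictDerivAt_const_rpow ht x).hasDerivAt
  have hquad : HasDerivAt (fun x : ℝ => x * (x - 1)) (1 * (x - 1) + x * 1) x :=
    (hasDerivAt_id x).mul ((hasDerivAt_id x).sub_const 1)
  have hlin : HasDerivAt (fun x : ℝ => x * a) (1 * a) x := (hasDerivAt_id x).mul_const a
  refine (((hquad.mul hpow).mul_const (Real.log (1 / t))).sub (hlin.mul hpow)).congr_deriv ?_
  rw [one_div, Real.log_inv]
  ring

theorem deriv_factor_nonpos {L a x : ℝ} (hL : 0 ≤ L) (ha : 0 ≤ a) (hx : x ≤ 0) :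
    (2 * x - 1) * L - a - x * (x - 1) * L ^ 2 + x * a * L ≤ 0 := by
  have h₁ : (2 * x - 1) * L ≤ 0 := mul_nonpos_of_nonpos_of_nonneg (by linarith) hL
  have h₂ : 0 ≤ x * (x - 1) * L ^ 2 :=
    mul_nonneg (mul_nonneg_of_nonpos_of_nonpos hx (by linarith)) (sq_nonneg L)
  have h₃ : x * a * L ≤ 0 := mul_nonpos_of_nonpos_of_nonneg (mul_nonpos_of_nonpos_of_nonneg hx ha) hL
  linarith

theorem antitoneOn_mul_rpow_log_sub {t a : ℝ} (ht0 : 0 < t) (ht1 : t ≤ 1) (ha : 0 ≤ a) :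
    AntitoneOn (fun x : ℝ => x * (x - 1) * t ^ x * Real.log (1 / t) - x * a * t ^ x) (Iic 0) := by
  have hL : 0 ≤ Real.log (1 / t) := Real.log_nonneg ((one_le_div ht0).2 ht1)
  have hderiv := fun x => hasDerivAt_mul_rpow_log_sub t a x ht0
  refine antitoneOn_of_hasDerivWithinAt_nonpos (convex_Iic 0)
    (fun x _ => (hderiv x).continuousAt.continuousWithinAt)
    (fun x _ => (hderiv x).hasDerivWithinAt) fun x hx => ?_
  rw [interior_Iic] at hx
  exact mul_nonpos_of_nonneg_of_nonpos (Real.rpow_pos_of_pos ht0 x).le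
    (deriv_factor_nonpos hL ha hx.le)

theorem stmt_16_general (μ ν σ ξ t : ℝ) (hσ2 : σ ≤ 1 / 2)
    (h1 : 1 / ξ + 2 / μ - 1 / ν ≥ 2)
    (ht : t ∈ Ioo (0:ℝ) 1) :
    AntitoneOn (fun x : ℝ =>
        x * (x - 1) * t ^ x * Real.log (1 / t) -
          x * ((1 / ξ + 2 / μ - 1 / ν - 2) * Real.log (1 / t) + (1 - 2 * σ)) * t ^ x)
      (Ioc (-1) 0) := by
  obtain ⟨ht0, ht1⟩ := ht
  have hL : 0 ≤ Real.log (1 / t) := Real.log_nonneg ((one_le_div ht0).2 ht1.le)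
  have ha : 0 ≤ (1 / ξ + 2 / μ - 1 / ν - 2) * Real.log (1 / t) + (1 - 2 * σ) :=
    add_nonneg (mul_nonneg (by linarith) hL) (by linarith)
  exact (antitoneOn_mul_rpow_log_sub ht0 ht1.le ha).mono Ioc_subset_Iic_self

theorem stmt_16 (μ ν σ ξ t : ℝ) (hμ : 1 ≤ μ) (hν : μ ≤ ν)
    (hσ0 : 0 ≤ σ) (hσ2 : σ ≤ 1 / 2) (hξ0 : 0 < ξ) (hξ1 : ξ ≤ 1)
    (h1 : 1 / ξ + 2 / μ - 1 / ν ≥ 2)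
    (hσ : σ ≤ (1 / 2) * ((1 / μ - 1 / ν) / (1 + 1 / μ - 1 / ν)))
    (ht : t ∈ Ioo (0:ℝ) 1) :
    AntitoneOn (fun x : ℝ =>
        x * (x - 1) * t ^ x * Real.log (1 / t) -
          x * ((1 / ξ + 2 / μ - 1 / ν - 2) * Real.log (1 / t) + (1 - 2 * σ)) * t ^ x)
      (Ioc (-1) 0) :=
  stmt_16_general μ ν σ ξ t hσ2 h1 ht
end
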